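/- Let H be a graph with at least one edge and no isolated edges such that k0 = k1 < k1' < k0', and suppose k0' ≤ k1' + (k0' − k0)/(k0 + 1). Then for every integer n ≥ |H|, sat(n, H) ≥ (k0 + (k0' − k0)/(k0' + 1))·n/2 − c1, where c1 = (k0 + 1)(k0' − k0)/(2·k0' + 2) + (k0 + 1)²/8. -/

import Mathlib

open SimpleGraph

/-- `G` contains a subgraph isomorphic to `H`. -/
def ContainsCopy {α β : Type*} (G : SimpleGraph α) (H : SimpleGraph β) : Prop :=
  ∃ f : β → α, Function.Injective f ∧ ∀ ⦃u v : β⦄, H.Adj u v → G.Adj (f u) (f v)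

/-- `G` is `H`-saturated: `G` is `H`-free but adding any edge creates a copy of `H`. -/
def IsSat {α β : Type*} (G : SimpleGraph α) (H : SimpleGraph β) : Prop :=
  ¬ ContainsCopy G H ∧
    ∀ x y : α, x ≠ y → ¬ G.Adj x y →
      ContainsCopy (G ⊔ SimpleGraph.fromEdgeSet {s(x, y)}) H

/-- The degree of a vertex. -/
noncomputable def deg {α : Type*} (G : SimpleGraph α) (v : α) : ℕ :=
  (G.neighborSet v).ncard

/-- `wt0 uv = max (d u) (d v) - 1`. -/
noncomputable def wt0 {β : Type*} (H : SimpleGraph β) (u v : β) : ℕ :=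
  max (deg H u) (deg H v) - 1

/-- The neighborhood of the edge `uv`: `(N(u) - v) ∪ (N(v) - u)`. -/
def edgeNbhd {β : Type*} (H : SimpleGraph β) (u v : β) : Set β :=
  (H.neighborSet u \ {v}) ∪ (H.neighborSet v \ {u})

/-- `wt1 uv`: the maximum degree of a vertex in the neighborhood of the edge `uv`. -/
noncomputable def wt1 {β : Type*} (H : SimpleGraph β) (u v : β) : ℕ :=
  sSup (deg H '' edgeNbhd H u v)

/-- `k0`: the minimum of `wt0` over the edges of `H`. -/
noncomputable def paramK0 {β : Type*} (H : SimpleGraph β) : ℕ :=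
  sInf {k | ∃ u v, H.Adj u v ∧ wt0 H u v = k}

/-- `k1`: the minimum of `wt1` over the edges of `H`. -/
noncomputable def paramK1 {β : Type*} (H : SimpleGraph β) : ℕ :=
  sInf {k | ∃ u v, H.Adj u v ∧ wt1 H u v = k}

/-- `k1'`: the minimum of `wt1` over the edges of `H` minimizing `wt0`. -/
noncomputable def paramK1p {β : Type*} (H : SimpleGraph β) : ℕ :=
  sInf {k | ∃ u v, H.Adj u v ∧ wt0 H u v = paramK0 H ∧ wt1 H u v = k}

/-- `k0'`: the minimum of `wt0` over the edges of `H` minimizing `wt1`. -/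
noncomputable def paramK0p {β : Type*} (H : SimpleGraph β) : ℕ :=
  sInf {k | ∃ u v, H.Adj u v ∧ wt1 H u v = paramK1 H ∧ wt0 H u v = k}

/-!
Adding a non-edge `xy` to an `H`-saturated graph `G` creates a copy of `H` in which some edge
`ab` of `H` lands on `xy`. Comparing degrees along this copy gives three constraints on every
non-adjacent pair `x, y` of `G`: `max (d x) (d y) ≥ k₀`; if `d x, d y ≤ k₀` then `x` or `y` has a
neighbour of degree `≥ k₁'`; if all neighbours of `x` and `y` have degree `≤ k₀` then
`max (d x) (d y) ≥ k₀'`.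

Now let every vertex of degree `≥ k₁'` send `δ = (k₀' - k₀) / (k₀' + 1)` to each neighbour of
degree `≤ k₀`. Every vertex ends with charge at least `k₀ + δ`, except for the vertices of degree
`< k₀`, the vertices of degree `≤ k₀` that receive nothing, and the vertices of degree in
`[k₁', k₀')` all of whose neighbours have degree `≤ k₀`. By the constraints, the first two
families are cliques, and the last two together have at most `k₀ + 1` vertices; so the total
shortfall is at most `(k₀ + 1)² / 4 + (k₀ + 1) δ`.
-/

open Finset

section EdgeWeights

variable {β : Type*} {H : SimpleGraph β}

lemma wt0_le_max {a b : β} {p q : ℕ} (ha : deg H a ≤ p + 1) (hb : deg H b ≤ q + 1) :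
    wt0 H a b ≤ max p q := by
  unfold wt0
  omega

lemma wt1_le_of_forall_deg_le {a b : β} (hne : (edgeNbhd H a b).Nonempty) {m : ℕ}
    (h : ∀ w ∈ edgeNbhd H a b, deg H w ≤ m) : wt1 H a b ≤ m :=
  csSup_le (hne.image _) (by rintro _ ⟨w, hw, rfl⟩; exact h w hw)

lemma exists_deg_eq_wt1 [Finite β] {a b : β} (hne : (edgeNbhd H a b).Nonempty) :
    ∃ w ∈ edgeNbhd H a b, deg H w = wt1 H a b :=
  Nat.sSup_mem (hne.image _) (Set.toFinite _).bddAbove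

lemma paramK0_le_wt0 {a b : β} (hab : H.Adj a b) : paramK0 H ≤ wt0 H a b :=
  Nat.sInf_le ⟨a, b, hab, rfl⟩

lemma paramK1_le_wt1 {a b : β} (hab : H.Adj a b) : paramK1 H ≤ wt1 H a b :=
  Nat.sInf_le ⟨a, b, hab, rfl⟩

lemma paramK1p_le_wt1 {a b : β} (hab : H.Adj a b) (h : wt0 H a b = paramK0 H) :
    paramK1p H ≤ wt1 H a b :=
  Nat.sInf_le ⟨a, b, hab, h, rfl⟩

lemma paramK0p_le_wt0 {a b : β} (hab : H.Adj a b) (h : wt1 H a b = paramK1 H) :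
    paramK0p H ≤ wt0 H a b :=
  Nat.sInf_le ⟨a, b, hab, h, rfl⟩

end EdgeWeights

lemma deg_eq_degree {V : Type*} (G : SimpleGraph V) (v : V) [Fintype (G.neighborSet v)] :
    deg G v = G.degree v := by
  rw [deg, Set.ncard_eq_toFinset_card', Set.toFinset_card, card_neighborSet_eq_degree]

section Copy

variable {α β : Type*} {G : SimpleGraph α} {H : SimpleGraph β}

lemma deg_le_ncard_of_mapsTo {f : β → α} (hf : f.Injective) {w : β} {s : Set α}
    (hs : s.Finite) (h : Set.MapsTo f (H.neighborSet w) s) : deg H w ≤ s.ncard := by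
  rw [deg, ← Set.ncard_image_of_injective _ hf]
  exact Set.ncard_le_ncard h.image_subset hs

structure IsCopyThroughEdge (G : SimpleGraph α) (H : SimpleGraph β) (f : β → α) (x y : α)
    (a b : β) : Prop where
  injective : f.Injective
  map_adj : ∀ ⦃u v⦄, H.Adj u v → (G ⊔ edge x y).Adj (f u) (f v)
  adj : H.Adj a b
  map_left : f a = x
  map_right : f b = y

namespace IsCopyThroughEdge

variable {f : β → α} {x y : α} {a b : β}

lemma symm (hc : IsCopyThroughEdge G H f x y a b) : IsCopyThroughEdge G H f y x b a where
  injective := hc.injective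
  map_adj := edge_comm x y ▸ hc.map_adj
  adj := hc.adj.symm
  map_left := hc.map_right
  map_right := hc.map_left

lemma adj_of_ne (hc : IsCopyThroughEdge G H f x y a b) {u v : β} (huv : H.Adj u v)
    (hua : u ≠ a) (hub : u ≠ b) : G.Adj (f u) (f v) := by
  rcases hc.map_adj huv with h | h
  · exact h
  · rcases ((edge_adj x y _ _).1 h).1 with ⟨h, -⟩ | ⟨h, -⟩
    · exact absurd (hc.injective (h.trans hc.map_left.symm)) hua
    · exact absurd (hc.injective (h.trans hc.map_right.symm)) hub

lemma adj_left_of_mem (hc : IsCopyThroughEdge G H f x y a b) {w : β}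
    (hw : w ∈ H.neighborSet a \ {b}) : G.Adj x (f w) :=
  hc.map_left ▸ (hc.adj_of_ne hw.1.symm hw.1.ne' hw.2).symm

lemma deg_le [Finite α] (hc : IsCopyThroughEdge G H f x y a b) {w : β} (hwa : w ≠ a)
    (hwb : w ≠ b) : deg H w ≤ deg G (f w) :=
  deg_le_ncard_of_mapsTo hc.injective (Set.toFinite _) fun _ hz => hc.adj_of_ne hz hwa hwb

lemma deg_left_le [Finite α] (hc : IsCopyThroughEdge G H f x y a b) :
    deg H a ≤ deg G x + 1 := by
  refine (deg_le_ncard_of_mapsTo hc.injective (Set.toFinite _) fun z hz => ?_).trans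
    (Set.ncard_insert_le y (G.neighborSet x))
  by_cases hzb : z = b
  · exact Or.inl (hzb ▸ hc.map_right)
  · exact Or.inr (hc.adj_left_of_mem ⟨hz, hzb⟩)

end IsCopyThroughEdge

lemma IsSat.exists_isCopyThroughEdge (hG : IsSat G H) {x y : α} (hxy : x ≠ y)
    (hna : ¬ G.Adj x y) : ∃ f a b, IsCopyThroughEdge G H f x y a b := by
  obtain ⟨f, hf, hom⟩ := hG.2 x y hxy hna
  by_contra! hno
  refine hG.1 ⟨f, hf, fun u v huv => ?_⟩
  rcases hom huv with h | h
  · exact h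
  · rcases ((edge_adj x y _ _).1 h).1 with ⟨hu, hv⟩ | ⟨hu, hv⟩
    · exact hno f u v ⟨hf, hom, huv, hu, hv⟩ |>.elim
    · exact hno f v u ⟨hf, hom, huv.symm, hv, hu⟩ |>.elim

lemma IsSat.exists_adj_deg_le [Fintype α] [DecidableRel G.Adj] (hG : IsSat G H) {x y : α}
    (hxy : x ≠ y) (hna : ¬ G.Adj x y) :
    ∃ a b, H.Adj a b ∧ deg H a ≤ G.degree x + 1 ∧ deg H b ≤ G.degree y + 1 ∧
      ∀ w ∈ edgeNbhd H a b, ∃ u, (G.Adj x u ∨ G.Adj y u) ∧ deg H w ≤ G.degree u := by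
  simp only [← deg_eq_degree]
  obtain ⟨f, a, b, hc⟩ := hG.exists_isCopyThroughEdge hxy hna
  refine ⟨a, b, hc.adj, hc.deg_left_le, hc.symm.deg_left_le, ?_⟩
  rintro w (hw | hw)
  · exact ⟨f w, Or.inl (hc.adj_left_of_mem hw), hc.deg_le hw.1.ne' hw.2⟩
  · exact ⟨f w, Or.inr (hc.symm.adj_left_of_mem hw), hc.deg_le hw.2 hw.1.ne'⟩

end Copy

section SaturatedGraphs

variable {α β : Type*} [Fintype α] {G : SimpleGraph α} [DecidableRel G.Adj] {H : SimpleGraph β}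
  {x y : α}

lemma IsSat.paramK0_le_max_degree (hG : IsSat G H) (hxy : x ≠ y) (hna : ¬ G.Adj x y) :
    paramK0 H ≤ max (G.degree x) (G.degree y) := by
  obtain ⟨a, b, hab, ha, hb, -⟩ := hG.exists_adj_deg_le hxy hna
  exact (paramK0_le_wt0 hab).trans (wt0_le_max ha hb)

lemma IsSat.exists_adj_paramK1p_le_degree [Finite β] (hG : IsSat G H)
    (hiso : ∀ u v, H.Adj u v → (edgeNbhd H u v).Nonempty) (hxy : x ≠ y) (hna : ¬ G.Adj x y)
    (hx : G.degree x ≤ paramK0 H) (hy : G.degree y ≤ paramK0 H) :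
    ∃ u, (G.Adj x u ∨ G.Adj y u) ∧ paramK1p H ≤ G.degree u := by
  obtain ⟨a, b, hab, ha, hb, hnbhd⟩ := hG.exists_adj_deg_le hxy hna
  have hwt0 : wt0 H a b = paramK0 H :=
    le_antisymm ((wt0_le_max ha hb).trans (max_le hx hy)) (paramK0_le_wt0 hab)
  obtain ⟨w, hw, hdw⟩ := exists_deg_eq_wt1 (hiso a b hab)
  obtain ⟨u, hu, hdu⟩ := hnbhd w hw
  exact ⟨u, hu, (paramK1p_le_wt1 hab hwt0).trans (hdw ▸ hdu)⟩

lemma IsSat.paramK0p_le_max_degree (hG : IsSat G H)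
    (hiso : ∀ u v, H.Adj u v → (edgeNbhd H u v).Nonempty) (h01 : paramK0 H = paramK1 H)
    (hxy : x ≠ y) (hna : ¬ G.Adj x y) (hx : ∀ u, G.Adj x u → G.degree u ≤ paramK0 H)
    (hy : ∀ u, G.Adj y u → G.degree u ≤ paramK0 H) :
    paramK0p H ≤ max (G.degree x) (G.degree y) := by
  obtain ⟨a, b, hab, ha, hb, hnbhd⟩ := hG.exists_adj_deg_le hxy hna
  have hwt1 : wt1 H a b ≤ paramK1 H :=
    h01 ▸ wt1_le_of_forall_deg_le (hiso a b hab) fun w hw => by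
      obtain ⟨u, hu | hu, hdu⟩ := hnbhd w hw
      exacts [hdu.trans (hx u hu), hdu.trans (hy u hu)]
  exact (paramK0p_le_wt0 hab (le_antisymm hwt1 (paramK1_le_wt1 hab))).trans (wt0_le_max ha hb)

end SaturatedGraphs

namespace SimpleGraph

variable {V : Type*} [Fintype V] {G : SimpleGraph V} [DecidableRel G.Adj]

section Cliques

variable [DecidableEq V] {T : Finset V}

lemma IsClique.erase_subset_neighborFinset (hT : G.IsClique (T : Set V)) {v : V} (hv : v ∈ T) :
    T.erase v ⊆ G.neighborFinset v := fun w hw =>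
  (G.mem_neighborFinset v w).2 (hT hv (mem_of_mem_erase hw) (ne_of_mem_erase hw).symm)

lemma IsClique.card_le_degree_add_one (hT : G.IsClique (T : Set V)) {v : V} (hv : v ∈ T) :
    #T ≤ G.degree v + 1 := by
  have := card_le_card (hT.erase_subset_neighborFinset hv)
  rw [card_neighborFinset_eq_degree, card_erase_of_mem hv] at this
  omega

lemma IsClique.mem_of_adj_of_degree_lt_card (hT : G.IsClique (T : Set V)) {v : V} (hv : v ∈ T)
    (hcard : G.degree v < #T) {u : V} (hu : G.Adj v u) : u ∈ T := by
  have heq : T.erase v = G.neighborFinset v := by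
    refine eq_of_subset_of_card_le (hT.erase_subset_neighborFinset hv) ?_
    rw [card_neighborFinset_eq_degree, card_erase_of_mem hv]
    omega
  exact mem_of_mem_erase (heq ▸ (G.mem_neighborFinset v u).2 hu)

/-- Each term is at most `k + 1 - #T`, and `t (k + 1 - t) ≤ (k + 1)² / 4`. -/
lemma IsClique.sum_sub_degree_le (hT : G.IsClique (T : Set V)) (k : ℝ) :
    ∑ v ∈ T, (k - G.degree v) ≤ (k + 1) ^ 2 / 4 := by
  have hterm : ∀ v ∈ T, k - G.degree v ≤ k + 1 - #T := fun v hv => by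
    have : (#T : ℝ) ≤ G.degree v + 1 := by exact_mod_cast hT.card_le_degree_add_one hv
    linarith
  have := sum_le_card_nsmul T _ _ hterm
  rw [nsmul_eq_mul] at this
  nlinarith [sq_nonneg ((#T : ℝ) - (k + 1) / 2)]

end Cliques

lemma card_adj_filter_le_degree (v : V) (P : V → Prop) [DecidablePred P] :
    #{u | G.Adj v u ∧ P u} ≤ G.degree v := by
  rw [← card_neighborFinset_eq_degree]
  exact card_le_card fun u hu => (G.mem_neighborFinset v u).2 (mem_filter.1 hu).2.1

lemma card_adj_filter_lt_degree {v : V} {P : V → Prop} [DecidablePred P]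
    (h : ∃ u, G.Adj v u ∧ ¬ P u) : #{u | G.Adj v u ∧ P u} < G.degree v := by
  obtain ⟨u, hvu, hu⟩ := h
  rw [← card_neighborFinset_eq_degree]
  refine card_lt_card ⟨fun w hw => (G.mem_neighborFinset v w).2 (mem_filter.1 hw).2.1,
    fun hsub => hu ?_⟩
  exact (mem_filter.1 (hsub ((G.mem_neighborFinset v u).2 hvu))).2.2

variable (G) in
/-- The charge of `v` after every vertex of degree at least `k'` has sent `δ` to each of its
neighbours of degree at most `k`. -/
def dischargedCharge (k k' : ℕ) (δ : ℝ) (v : V) : ℝ :=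
  G.degree v + δ * #{u | G.Adj v u ∧ G.degree v ≤ k ∧ k' ≤ G.degree u}
    - δ * #{u | G.Adj v u ∧ G.degree u ≤ k ∧ k' ≤ G.degree v}

lemma sum_dischargedCharge (k k' : ℕ) (δ : ℝ) :
    ∑ v, G.dischargedCharge k k' δ v = ∑ v, (G.degree v : ℝ) := by
  have htransfer : ∑ v, #{u | G.Adj v u ∧ G.degree v ≤ k ∧ k' ≤ G.degree u} =
      ∑ v, #{u | G.Adj v u ∧ G.degree u ≤ k ∧ k' ≤ G.degree v} := by
    simpa [bipartiteAbove, bipartiteBelow, G.adj_comm] using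
      sum_card_bipartiteAbove_eq_sum_card_bipartiteBelow (s := univ) (t := univ)
        (fun v u => G.Adj v u ∧ G.degree v ≤ k ∧ k' ≤ G.degree u)
  have hcast := congrArg (Nat.cast : ℕ → ℝ) htransfer
  push_cast at hcast
  simp only [dischargedCharge, sum_sub_distrib, sum_add_distrib, ← mul_sum, hcast,
    add_sub_cancel_right]

variable (G) in
/-- Vertices of degree at most `k` that receive no charge. -/
def unfedSet (k k' : ℕ) : Finset V :=
  {v | G.degree v ≤ k ∧ ∀ u, G.Adj v u → G.degree u < k'}

variable (G) in
/-- Vertices of degree in `[k', k'')` that give charge to all their neighbours. -/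
def drainedSet (k k' k'' : ℕ) : Finset V :=
  {v | k' ≤ G.degree v ∧ G.degree v < k'' ∧ ∀ u, G.Adj v u → G.degree u ≤ k}

variable {k k' k'' : ℕ} {δ : ℝ} {v : V}

lemma le_dischargedCharge_of_degree_le [DecidableEq V] (hkk' : k < k') (hδ : 0 ≤ δ)
    (hv : G.degree v ≤ k) :
    k + δ ≤ G.dischargedCharge k k' δ v + (k - G.degree v) +
      if v ∈ G.unfedSet k k' then δ else 0 := by
  have hsent : #{u | G.Adj v u ∧ G.degree u ≤ k ∧ k' ≤ G.degree v} = 0 := by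
    simp [show ¬ k' ≤ G.degree v by omega]
  have hreceived :=
    Nat.cast_nonneg (α := ℝ) #{u | G.Adj v u ∧ G.degree v ≤ k ∧ k' ≤ G.degree u}
  simp only [dischargedCharge, hsent, Nat.cast_zero, mul_zero, sub_zero]
  by_cases hvU : v ∈ G.unfedSet k k'
  · rw [if_pos hvU]
    linarith [mul_nonneg hδ hreceived]
  · obtain ⟨u, hvu, hu⟩ : ∃ u, G.Adj v u ∧ k' ≤ G.degree u := by
      simpa [unfedSet, hv] using hvU
    have : (1 : ℝ) ≤ #{u | G.Adj v u ∧ G.degree v ≤ k ∧ k' ≤ G.degree u} := by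
      exact_mod_cast card_pos.2 ⟨u, by simp [hvu, hv, hu]⟩
    rw [if_neg hvU]
    linarith [mul_le_mul_of_nonneg_left this hδ]

lemma le_dischargedCharge_of_lt_degree_of_degree_lt (hδ : δ ≤ 1) (hv : k < G.degree v)
    (hv' : G.degree v < k') : k + δ ≤ G.dischargedCharge k k' δ v := by
  have hk : (k : ℝ) + 1 ≤ G.degree v := by exact_mod_cast hv
  have hcharge : G.dischargedCharge k k' δ v = G.degree v := by
    simp [dischargedCharge, show ¬ G.degree v ≤ k by omega, show ¬ k' ≤ G.degree v by omega]
  linarith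

/-- A vertex of degree `d ≥ k'` keeps at least `d (1 - δ)`, and `δ` more unless it is drained
or `d ≥ k''`. -/
lemma le_dischargedCharge_of_le_degree [DecidableEq V] (hkk' : k < k') (hδ0 : 0 ≤ δ)
    (hδ1 : δ ≤ 1) (hk' : k ≤ k' * (1 - δ)) (hk'' : k + δ ≤ k'' * (1 - δ)) (hv : k' ≤ G.degree v) :
    k + δ ≤ G.dischargedCharge k k' δ v + if v ∈ G.drainedSet k k' k'' then δ else 0 := by
  set s := #{u | G.Adj v u ∧ G.degree u ≤ k ∧ k' ≤ G.degree v}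
  have hs : (s : ℝ) ≤ G.degree v := by exact_mod_cast card_adj_filter_le_degree v _
  have hdeg : (k' : ℝ) ≤ G.degree v := by exact_mod_cast hv
  have hcharge : G.dischargedCharge k k' δ v = G.degree v - δ * s := by
    simp [dischargedCharge, s, show ¬ G.degree v ≤ k by omega]
  rw [hcharge]
  have hkeep : (k' : ℝ) * (1 - δ) ≤ G.degree v * (1 - δ) :=
    mul_le_mul_of_nonneg_right hdeg (by linarith)
  have hite : 0 ≤ if v ∈ G.drainedSet k k' k'' then δ else 0 := by split_ifs <;> linarith
  by_cases hv'' : k'' ≤ G.degree v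
  · have : (k'' : ℝ) * (1 - δ) ≤ G.degree v * (1 - δ) :=
      mul_le_mul_of_nonneg_right (by exact_mod_cast hv'') (by linarith)
    linarith [mul_le_mul_of_nonneg_left hs hδ0]
  by_cases hlow : ∀ u, G.Adj v u → G.degree u ≤ k
  · rw [if_pos (by simpa [drainedSet, hv, not_le.1 hv''] using hlow)]
    linarith [mul_le_mul_of_nonneg_left hs hδ0]
  · obtain ⟨u, hvu, hu⟩ := not_forall₂.1 hlow
    have hs' : (s : ℝ) + 1 ≤ G.degree v := by
      exact_mod_cast card_adj_filter_lt_degree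
        (P := fun u => G.degree u ≤ k ∧ k' ≤ G.degree v) ⟨u, hvu, fun h => hu h.1⟩
    linarith [mul_le_mul_of_nonneg_left hs' hδ0]

lemma card_mul_le_sum_degree_add [DecidableEq V] (hkk' : k < k') (hδ0 : 0 ≤ δ)
    (hδ1 : δ ≤ 1) (hk' : k ≤ k' * (1 - δ)) (hk'' : k + δ ≤ k'' * (1 - δ)) :
    (k + δ) * Fintype.card V ≤ ∑ v, (G.degree v : ℝ) +
      ∑ v with G.degree v < k, (k - G.degree v : ℝ) +
        δ * (#(G.unfedSet k k') + #(G.drainedSet k k' k'')) := by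
  have hvertex : ∀ v, k + δ ≤ G.dischargedCharge k k' δ v +
      ((if G.degree v < k then (k - G.degree v : ℝ) else 0) +
        (if v ∈ G.unfedSet k k' then δ else 0) +
          (if v ∈ G.drainedSet k k' k'' then δ else 0)) := by
    intro v
    have hS : 0 ≤ if G.degree v < k then (k - G.degree v : ℝ) else 0 := by
      split_ifs with h
      exacts [sub_nonneg.2 (by exact_mod_cast h.le), le_rfl]
    have hU : 0 ≤ if v ∈ G.unfedSet k k' then δ else 0 := ite_nonneg hδ0 le_rfl
    have hZ : 0 ≤ if v ∈ G.drainedSet k k' k'' then δ else 0 := ite_nonneg hδ0 le_rfl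
    rcases le_or_gt (G.degree v) k with hv | hv
    · have hS' : (k - G.degree v : ℝ) ≤
          if G.degree v < k then (k - G.degree v : ℝ) else 0 := by
        split_ifs with h
        exacts [le_rfl, sub_nonpos.2 (by exact_mod_cast not_lt.1 h)]
      linarith [le_dischargedCharge_of_degree_le hkk' hδ0 hv]
    rcases lt_or_ge (G.degree v) k' with hv' | hv'
    · linarith [le_dischargedCharge_of_lt_degree_of_degree_lt hδ1 hv hv']
    · linarith [le_dischargedCharge_of_le_degree (k'' := k'') hkk' hδ0 hδ1 hk' hk'' hv']
  have := sum_le_sum fun v (_ : v ∈ univ) => hvertex v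
  simp only [sum_const, card_univ, nsmul_eq_mul, sum_add_distrib, sum_dischargedCharge,
    ← sum_filter, filter_univ_mem] at this
  linarith

lemma isClique_filter_degree_lt
    (h1 : ∀ x y, x ≠ y → ¬ G.Adj x y → k ≤ max (G.degree x) (G.degree y)) :
    G.IsClique (({v | G.degree v < k} : Finset V) : Set V) := by
  intro x hx y hy hxy
  by_contra hna
  simp only [coe_filter, mem_univ, true_and, Set.mem_ofPred_eq] at hx hy
  have := h1 x y hxy hna
  omega

lemma isClique_unfedSet
    (h2 : ∀ x y, x ≠ y → ¬ G.Adj x y → G.degree x ≤ k → G.degree y ≤ k →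
      ∃ u, (G.Adj x u ∨ G.Adj y u) ∧ k' ≤ G.degree u) :
    G.IsClique (G.unfedSet k k' : Set V) := by
  intro x hx y hy hxy
  by_contra hna
  simp only [unfedSet, coe_filter, mem_univ, true_and, Set.mem_ofPred_eq] at hx hy
  obtain ⟨u, hu | hu, hdu⟩ := h2 x y hxy hna hx.1 hy.1
  · exact (hx.2 u hu).not_ge hdu
  · exact (hy.2 u hu).not_ge hdu

lemma card_drainedSet_le_one (hkk' : k < k')
    (h3 : ∀ x y, x ≠ y → ¬ G.Adj x y → (∀ u, G.Adj x u → G.degree u ≤ k) →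
      (∀ u, G.Adj y u → G.degree u ≤ k) → k'' ≤ max (G.degree x) (G.degree y)) :
    #(G.drainedSet k k' k'') ≤ 1 := by
  refine card_le_one.2 fun x hx y hy => by_contra fun hxy => ?_
  simp only [drainedSet, mem_filter, mem_univ, true_and] at hx hy
  by_cases hadj : G.Adj x y
  · have := hx.2.2 y hadj
    omega
  · have := h3 x y hxy hadj hx.2.2 hy.2.2
    omega

/-- If the clique `unfedSet` had `k + 1` vertices, each of them would have all its neighbours
inside it, so `h3` would apply to it and a drained vertex. -/
lemma card_unfedSet_add_card_drainedSet_le [DecidableEq V] (hkk' : k < k')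
    (h2 : ∀ x y, x ≠ y → ¬ G.Adj x y → G.degree x ≤ k → G.degree y ≤ k →
      ∃ u, (G.Adj x u ∨ G.Adj y u) ∧ k' ≤ G.degree u)
    (h3 : ∀ x y, x ≠ y → ¬ G.Adj x y → (∀ u, G.Adj x u → G.degree u ≤ k) →
      (∀ u, G.Adj y u → G.degree u ≤ k) → k'' ≤ max (G.degree x) (G.degree y)) :
    #(G.unfedSet k k') + #(G.drainedSet k k' k'') ≤ k + 1 := by
  have hU := isClique_unfedSet h2
  have hUmem : ∀ {v}, v ∈ G.unfedSet k k' →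
      G.degree v ≤ k ∧ ∀ u, G.Adj v u → G.degree u < k' :=
    fun hv => by simpa [unfedSet] using hv
  have hUcard : #(G.unfedSet k k') ≤ k + 1 := by
    obtain hempty | ⟨v, hv⟩ := (G.unfedSet k k').eq_empty_or_nonempty
    · simp [hempty]
    · exact (hU.card_le_degree_add_one hv).trans (by have := (hUmem hv).1; omega)
  obtain hempty | ⟨z, hz⟩ := (G.drainedSet k k' k'').eq_empty_or_nonempty
  · simpa [hempty] using hUcard
  have hZcard := card_drainedSet_le_one hkk' h3
  simp only [drainedSet, mem_filter, mem_univ, true_and] at hz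
  by_contra! hcard
  obtain ⟨y, hy⟩ : (G.unfedSet k k').Nonempty := card_pos.1 (by omega)
  have hdy := (hUmem hy).1
  have hy_full : ∀ u, G.Adj y u → G.degree u ≤ k := fun u hu =>
    (hUmem (hU.mem_of_adj_of_degree_lt_card hy (by omega) hu)).1
  have hyz : y ≠ z := by rintro rfl; omega
  have := h3 y z hyz (fun h => by have := hy_full z h; omega) hy_full hz.2.2
  omega

theorem le_two_mul_card_edgeFinset [DecidableEq V] (hkk' : k < k') (hδ0 : 0 ≤ δ)
    (hδ1 : δ ≤ 1) (hk' : k ≤ k' * (1 - δ)) (hk'' : k + δ ≤ k'' * (1 - δ))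
    (h1 : ∀ x y, x ≠ y → ¬ G.Adj x y → k ≤ max (G.degree x) (G.degree y))
    (h2 : ∀ x y, x ≠ y → ¬ G.Adj x y → G.degree x ≤ k → G.degree y ≤ k →
      ∃ u, (G.Adj x u ∨ G.Adj y u) ∧ k' ≤ G.degree u)
    (h3 : ∀ x y, x ≠ y → ¬ G.Adj x y → (∀ u, G.Adj x u → G.degree u ≤ k) →
      (∀ u, G.Adj y u → G.degree u ≤ k) → k'' ≤ max (G.degree x) (G.degree y)) :
    (k + δ) * Fintype.card V - (k + 1) ^ 2 / 4 - (k + 1) * δ ≤ 2 * #G.edgeFinset := by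
  have hsum := card_mul_le_sum_degree_add (G := G) hkk' hδ0 hδ1 hk' hk''
  have hS := (isClique_filter_degree_lt h1).sum_sub_degree_le (k : ℝ)
  have hUZ : (#(G.unfedSet k k') + #(G.drainedSet k k' k'') : ℝ) ≤ k + 1 := by
    exact_mod_cast card_unfedSet_add_card_drainedSet_le hkk' h2 h3
  have hdeg : ∑ v, (G.degree v : ℝ) = 2 * #G.edgeFinset := by
    exact_mod_cast G.sum_degrees_eq_twice_card_edges
  linarith [mul_le_mul_of_nonneg_left hUZ hδ0]

end SimpleGraph

lemma le_mul_one_sub_div {k k' k'' : ℝ} (hk : 0 ≤ k) (hk'' : 0 ≤ k'')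
    (hcond : k'' ≤ k' + (k'' - k) / (k + 1)) : k ≤ k' * (1 - (k'' - k) / (k'' + 1)) := by
  have hcond' : (k'' - k') * (k + 1) ≤ k'' - k := by
    rw [← le_div_iff₀ (by positivity)]
    linarith
  rw [one_sub_div (by positivity), mul_div_assoc', le_div_iff₀ (by positivity)]
  linarith

lemma add_div_eq_mul_one_sub_div {k k'' : ℝ} (hk'' : 0 ≤ k'') :
    k + (k'' - k) / (k'' + 1) = k'' * (1 - (k'' - k) / (k'' + 1)) := by
  field_simp
  ring

theorem stmt8_general {β : Type*} [Fintype β] (H : SimpleGraph β)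
    (hiso : ∀ u v, H.Adj u v → (edgeNbhd H u v).Nonempty)
    (h01 : paramK0 H = paramK1 H) (h11 : paramK1 H < paramK1p H)
    (h10 : paramK1p H < paramK0p H)
    (hcond : (paramK0p H : ℝ) ≤ (paramK1p H : ℝ) +
      ((paramK0p H : ℝ) - (paramK0 H : ℝ)) / ((paramK0 H : ℝ) + 1))
    (n : ℕ)
    (G : SimpleGraph (Fin n)) (hG : IsSat G H) :
    ((paramK0 H : ℝ) +
        ((paramK0p H : ℝ) - (paramK0 H : ℝ)) / ((paramK0p H : ℝ) + 1)) * n / 2 -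
      (((paramK0 H : ℝ) + 1) * ((paramK0p H : ℝ) - (paramK0 H : ℝ)) /
          (2 * (paramK0p H : ℝ) + 2) +
        ((paramK0 H : ℝ) + 1) ^ 2 / 8) ≤
      (G.edgeSet.ncard : ℝ) := by
  classical
  set k := paramK0 H
  set k'' := paramK0p H
  have hkk' : k < paramK1p H := h01 ▸ h11
  have hkk'' : (k : ℝ) ≤ k'' := by exact_mod_cast (hkk'.trans h10).le
  have hbound := G.le_two_mul_card_edgeFinset hkk'
    (div_nonneg (by linarith) (by positivity)) ((div_le_one (by positivity)).2 (by linarith))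
    (le_mul_one_sub_div k.cast_nonneg k''.cast_nonneg hcond)
    (add_div_eq_mul_one_sub_div k''.cast_nonneg).le
    (fun _ _ => hG.paramK0_le_max_degree) (fun _ _ => hG.exists_adj_paramK1p_le_degree hiso)
    (fun _ _ => hG.paramK0p_le_max_degree hiso h01)
  have hc1 : ((k : ℝ) + 1) * (k'' - k) / (2 * k'' + 2) =
      (k + 1) * ((k'' - k) / (k'' + 1)) / 2 := by
    field_simp
  rw [Fintype.card_fin] at hbound
  rw [← coe_edgeFinset, Set.ncard_coe_finset, hc1]
  linarith

/-- Lemma (general, part 2, first case): if `k0 = k1 < k1' < k0'` and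
`k0' ≤ k1' + (k0' - k0)/(k0 + 1)`, then `sat(n, H) ≥ (k0 + (k0' - k0)/(k0' + 1)) * n/2 - c1`. -/
theorem stmt8 {β : Type*} [Fintype β] (H : SimpleGraph β)
    (hedge : ∃ u v, H.Adj u v)
    (hiso : ∀ u v, H.Adj u v → (edgeNbhd H u v).Nonempty)
    (h01 : paramK0 H = paramK1 H) (h11 : paramK1 H < paramK1p H)
    (h10 : paramK1p H < paramK0p H)
    (hcond : (paramK0p H : ℝ) ≤ (paramK1p H : ℝ) +
      ((paramK0p H : ℝ) - (paramK0 H : ℝ)) / ((paramK0 H : ℝ) + 1))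
    (n : ℕ) (hn : Fintype.card β ≤ n)
    (G : SimpleGraph (Fin n)) (hG : IsSat G H) :
    ((paramK0 H : ℝ) +
        ((paramK0p H : ℝ) - (paramK0 H : ℝ)) / ((paramK0p H : ℝ) + 1)) * n / 2 -
      (((paramK0 H : ℝ) + 1) * ((paramK0p H : ℝ) - (paramK0 H : ℝ)) /
          (2 * (paramK0p H : ℝ) + 2) +
        ((paramK0 H : ℝ) + 1) ^ 2 / 8) ≤
      (G.edgeSet.ncard : ℝ) :=
  stmt8_general H hiso h01 h11 h10 hcond n G hG
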